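/- Consider graphs in the half-edge formalism whose half-edges are coloured either 'straight' or 'wavy', with the involution colour-preserving. Call such a graph a φ²A-graph if it is finite, connected, every vertex is incident to exactly two straight half-edges and one wavy half-edge, and every wavy half-edge is internal (not fixed by the involution). Let G_S be the graph with two vertices joined by an internal wavy edge, each vertex additionally carrying two external straight half-edges. Let L be the smallest set of isomorphism classes of such coloured graphs such that: (i) G_S ∈ L; (ii) if G ∈ L and f ≠ f' are two straight external half-edges of G, then the graph obtained by joining f and f' into an internal edge belongs to L; (iii) if G ∈ L and f is a straight external half-edge of G, then the graph obtained by taking the disjoint union of G with a fresh copy of G_S and joining f to one straight external half-edge of that copy belongs to L. Then L is exactly the set of isomorphism classes of φ²A-graphs. -/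

import Mathlib

open scoped Classical

noncomputable section

/-- A finite graph in the half-edge formalism whose half-edges are coloured either
'straight' (`false`) or 'wavy' (`true`). -/
structure ColouredGraph : Type 1 where
  V : Type
  F : Type
  [fintV : Fintype V]
  [fintF : Fintype F]
  att : F → V
  inv : F → F
  colour : F → Bool

attribute [instance] ColouredGraph.fintV ColouredGraph.fintF

namespace ColouredGraph

/-- Isomorphism of coloured half-edge graphs. -/
def Iso (G G' : ColouredGraph) : Prop :=
  ∃ (eV : G.V ≃ G'.V) (eF : G.F ≃ G'.F),
    (∀ f, eV (G.att f) = G'.att (eF f)) ∧ (∀ f, eF (G.inv f) = G'.inv (eF f)) ∧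
    (∀ f, G'.colour (eF f) = G.colour f)

/-- Adjacency through an internal edge. -/
def Adj (G : ColouredGraph) (u v : G.V) : Prop :=
  ∃ f, G.inv f ≠ f ∧ G.att f = u ∧ G.att (G.inv f) = v

/-- Connectedness. -/
def Connected (G : ColouredGraph) : Prop :=
  Nonempty G.V ∧ ∀ u v : G.V, Relation.ReflTransGen G.Adj u v

end ColouredGraph

/-- The start graph `G_S` of the `φ²A`-theory: two vertices joined by an internal wavy
edge, each vertex additionally carrying two external straight half-edges. -/
def GS : ColouredGraph where
  V := Bool
  F := Bool × Fin 3
  att := fun p => p.1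
  inv := fun p => if p.2 = 2 then (!p.1, p.2) else p
  colour := fun p => decide (p.2 = 2)

/-- Join two straight external half-edges `f ≠ f'` of `G` into an internal edge. -/
def joinExt (G : ColouredGraph) (f f' : G.F) : ColouredGraph where
  V := G.V
  F := G.F
  att := G.att
  inv := fun g => if g = f then f' else if g = f' then f else G.inv g
  colour := G.colour

/-- Disjoint union of `G` with a fresh copy of `G_S`, joining the half-edge `f` of `G`
to the half-edge `g` of that copy. -/
def attachGS (G : ColouredGraph) (f : G.F) (g : Bool × Fin 3) : ColouredGraph where
  V := G.V ⊕ Bool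
  F := G.F ⊕ (Bool × Fin 3)
  att := Sum.elim (fun a => Sum.inl (G.att a)) (fun b => Sum.inr b.1)
  inv := Sum.elim
    (fun a => if a = f then Sum.inr g else Sum.inl (G.inv a))
    (fun b => if b = g then Sum.inl f
      else if b.2 = 2 then Sum.inr (!b.1, b.2) else Sum.inr b)
  colour := Sum.elim G.colour (fun b => decide (b.2 = 2))

/-- The smallest (isomorphism-invariant) class of coloured half-edge graphs containing
`G_S` and closed under joining two straight external half-edges and under attaching a
fresh copy of `G_S` along a straight external half-edge. -/
inductive InLangA : ColouredGraph → Prop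
  | start : InLangA GS
  | join {G : ColouredGraph} (hG : InLangA G) (f f' : G.F)
      (hf : G.inv f = f) (hf' : G.inv f' = f') (hne : f ≠ f')
      (hcf : G.colour f = false) (hcf' : G.colour f' = false) :
      InLangA (joinExt G f f')
  | attach {G : ColouredGraph} (hG : InLangA G) (f : G.F)
      (hf : G.inv f = f) (hcf : G.colour f = false)
      (g : Bool × Fin 3) (hg : ¬ g.2 = 2) : InLangA (attachGS G f g)
  | iso {G G' : ColouredGraph} (hG : InLangA G) (h : G.Iso G') : InLangA G'

/-- A `φ²A`-graph: finite, connected, colour-preserving involution, every vertex has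
exactly two straight and one wavy half-edge, and every wavy half-edge is internal. -/
def IsPhi2AGraph (G : ColouredGraph) : Prop :=
  Function.Involutive G.inv ∧
  (∀ f, G.colour (G.inv f) = G.colour f) ∧
  G.Connected ∧
  (∀ v : G.V, Fintype.card {f : G.F // G.att f = v ∧ G.colour f = false} = 2) ∧
  (∀ v : G.V, Fintype.card {f : G.F // G.att f = v ∧ G.colour f = true} = 1) ∧
  (∀ f, G.colour f = true → G.inv f ≠ f)


/-!
Each production preserves the local conditions at the vertices and connectedness, so every graph
of the language is a `φ²A`-graph. Conversely, induct on the number of internal straight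
half-edges. If there is none, the wavy edges are the only edges and connectedness forces
`G ≅ G_S`. If some internal straight edge is not a bridge, cutting it leaves a smaller
`φ²A`-graph from which `G` is recovered by a join. Otherwise every internal straight edge is a
bridge; for one whose far side is smallest, that side contains no further internal straight edge,
so it is a copy of `G_S`, and `G` is the `φ²A`-graph on the near side with that copy attached.
-/

open Function Relation

namespace ColouredGraph

variable {G H : ColouredGraph}

theorem adj_symm (hG : Involutive G.inv) : Std.Symm G.Adj where
  symm := by
    rintro u v ⟨k, hk, rfl, rfl⟩
    exact ⟨G.inv k, by rwa [hG k, ne_comm], rfl, by rw [hG k]⟩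

theorem reach_symm (hG : Involutive G.inv) {u v : G.V} (h : ReflTransGen G.Adj u v) :
    ReflTransGen G.Adj v u :=
  haveI := adj_symm hG
  Std.Symm.symm _ _ h

theorem connected_of_reach (hG : Involutive G.inv) (v₀ : G.V)
    (h : ∀ v, ReflTransGen G.Adj v₀ v) : G.Connected :=
  ⟨⟨v₀⟩, fun u v => (reach_symm hG (h u)).trans (h v)⟩

theorem connected_update_inv (hG : G.Connected) {i : G.F → G.F}
    (hi : ∀ f, G.inv f ≠ f → i f = G.inv f) : ({ G with inv := i } : ColouredGraph).Connected :=
  ⟨hG.1, fun u v => ReflTransGen.mono (fun _ _ ⟨k, hk, hu, hv⟩ =>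
    ⟨k, show i k ≠ k by rwa [hi k hk], hu, show G.att (i k) = _ by rw [hi k hk, hv]⟩) _ _
      (hG.2 u v)⟩

theorem Iso.symm (h : G.Iso H) : H.Iso G := by
  obtain ⟨eV, eF, hatt, hinv, hcol⟩ := h
  refine ⟨eV.symm, eF.symm, fun f => ?_, fun f => ?_, fun f => ?_⟩
  · rw [Equiv.symm_apply_eq, hatt, Equiv.apply_symm_apply]
  · rw [Equiv.symm_apply_eq, hinv, Equiv.apply_symm_apply]
  · rw [← hcol, Equiv.apply_symm_apply]

theorem card_fibre_eq (ψ : G.V → H.V) (φ : G.F → H.F) (hψ : Injective ψ) (hφ : Injective φ)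
    (hatt : ∀ x, H.att (φ x) = ψ (G.att x)) (hcol : ∀ x, H.colour (φ x) = G.colour x)
    (hcover : ∀ f v, H.att f = ψ v → f ∈ Set.range φ) (v : G.V) (c : Bool) :
    Fintype.card {x : G.F // G.att x = v ∧ G.colour x = c} =
      Fintype.card {f : H.F // H.att f = ψ v ∧ H.colour f = c} := by
  refine Fintype.card_of_bijective
    (f := fun x => ⟨φ x.1, by rw [hatt, x.2.1], by rw [hcol, x.2.2]⟩) ⟨?_, ?_⟩
  · exact fun x y hxy => Subtype.ext (hφ (congrArg Subtype.val hxy))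
  · rintro ⟨f, hfv, hfc⟩
    obtain ⟨x, rfl⟩ := hcover f v hfv
    exact ⟨⟨x, hψ (by rw [← hatt, hfv]), by rwa [← hcol]⟩, rfl⟩

def numInternalStraight (G : ColouredGraph) : ℕ :=
  Fintype.card {f : G.F // G.colour f = false ∧ G.inv f ≠ f}

theorem numInternalStraight_lt (φ : G.F → H.F) (hφ : Injective φ)
    (hcol : ∀ x, H.colour (φ x) = G.colour x) (hinv : ∀ x, G.inv x ≠ x → H.inv (φ x) ≠ φ x)
    {f : H.F} (hfc : H.colour f = false) (hfi : H.inv f ≠ f)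
    (hmiss : ∀ x, G.inv x ≠ x → φ x ≠ f) :
    G.numInternalStraight < H.numInternalStraight :=
  Fintype.card_lt_of_injective_of_notMem
    (fun x => ⟨φ x.1, by rw [hcol]; exact x.2.1, hinv _ x.2.2⟩)
    (fun x y h => Subtype.ext (hφ (congrArg Subtype.val h))) (b := ⟨f, hfc, hfi⟩)
    (by rintro ⟨x, hx⟩; exact hmiss x.1 x.2.2 (congrArg Subtype.val hx))

theorem eq_of_wavy_of_att_eq
    (hw : ∀ v, Fintype.card {f : G.F // G.att f = v ∧ G.colour f = true} = 1) {a b : G.F}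
    (ha : G.colour a = true) (hb : G.colour b = true) (hab : G.att a = G.att b) : a = b :=
  congrArg Subtype.val <| Fintype.card_le_one_iff.mp (hw (G.att b)).le ⟨a, hab, ha⟩ ⟨b, rfl, hb⟩

theorem exists_fibreEquiv {v : G.V}
    (hs : Fintype.card {f : G.F // G.att f = v ∧ G.colour f = false} = 2)
    (hw : Fintype.card {f : G.F // G.att f = v ∧ G.colour f = true} = 1) :
    ∃ e : {f : G.F // G.att f = v} ≃ Fin 3, ∀ x, G.colour x.1 = true ↔ e x = 2 := by
  let p : {f : G.F // G.att f = v} → Prop := fun x => G.colour x.1 = false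
  have hs' : Fintype.card {x // p x} = 2 :=
    (Fintype.card_congr (Equiv.subtypeSubtypeEquivSubtypeInter _ _)).trans hs
  have hw' : Fintype.card {x // ¬ p x} = 1 := by
    simp only [p, Bool.not_eq_false]
    exact (Fintype.card_congr (Equiv.subtypeSubtypeEquivSubtypeInter _ _)).trans hw
  refine ⟨(Equiv.sumCompl p).symm.trans ((Equiv.sumCongr (Fintype.equivFinOfCardEq hs')
    (Fintype.equivFinOfCardEq hw')).trans finSumFinEquiv), fun x => ?_⟩
  by_cases hx : p x
  · simp only [Equiv.trans_apply, Equiv.sumCompl_symm_apply_of_pos hx, Equiv.sumCongr_apply,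
      Sum.map_inl]
    generalize Fintype.equivFinOfCardEq hs' ⟨x, hx⟩ = j
    simp only [p] at hx
    simp only [hx, Bool.false_eq_true, false_iff]
    intro h
    have h' : (j : ℕ) = 2 := congrArg Fin.val h
    omega
  · simp only [Equiv.trans_apply, Equiv.sumCompl_symm_apply_of_neg hx, Equiv.sumCongr_apply,
      Sum.map_inr]
    generalize Fintype.equivFinOfCardEq hw' ⟨x, hx⟩ = j
    simp only [p, Bool.not_eq_false] at hx
    simp only [hx, true_iff]
    exact Fin.ext (show 2 + (j : ℕ) = 2 by omega)

/-- Half-edges labelled as in `G_S`. -/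
theorem exists_halfEdgeEquiv
    (hs : ∀ v, Fintype.card {f : G.F // G.att f = v ∧ G.colour f = false} = 2)
    (hw : ∀ v, Fintype.card {f : G.F // G.att f = v ∧ G.colour f = true} = 1) :
    ∃ e : G.F ≃ G.V × Fin 3, ∀ f, (e f).1 = G.att f ∧ (G.colour f = true ↔ (e f).2 = 2) := by
  choose loc hloc using fun v => exists_fibreEquiv (hs v) (hw v)
  exact ⟨(Equiv.sigmaFiberEquiv G.att).symm.trans
    ((Equiv.sigmaCongrRight loc).trans (Equiv.sigmaEquivProd _ _)),
    fun f => ⟨rfl, hloc _ ⟨f, rfl⟩⟩⟩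

/-! ### Cutting an edge -/

abbrev cut (G : ColouredGraph) (f : G.F) : ColouredGraph :=
  { G with inv := fun h => if h = f ∨ h = G.inv f then h else G.inv h }

theorem cut_inv_of_ne {f h : G.F} (h₁ : h ≠ f) (h₂ : h ≠ G.inv f) :
    (G.cut f).inv h = G.inv h :=
  if_neg (by tauto)

theorem cut_inv_ne_iff {f h : G.F} :
    (G.cut f).inv h ≠ h ↔ h ≠ f ∧ h ≠ G.inv f ∧ G.inv h ≠ h := by
  by_cases hh : h = f ∨ h = G.inv f
  · have : (G.cut f).inv h = h := if_pos hh
    tauto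
  · push Not at hh
    rw [cut_inv_of_ne hh.1 hh.2]
    tauto

theorem cut_adj_iff {f : G.F} {u v : G.V} :
    (G.cut f).Adj u v ↔
      ∃ k, k ≠ f ∧ k ≠ G.inv f ∧ G.inv k ≠ k ∧ G.att k = u ∧ G.att (G.inv k) = v := by
  constructor
  · rintro ⟨k, hk, rfl, rfl⟩
    obtain ⟨h₁, h₂, hk'⟩ := cut_inv_ne_iff.mp hk
    exact ⟨k, h₁, h₂, hk', rfl, by rw [cut_inv_of_ne (G := G) h₁ h₂]⟩
  · rintro ⟨k, h₁, h₂, hk, rfl, rfl⟩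
    exact ⟨k, cut_inv_ne_iff.mpr ⟨h₁, h₂, hk⟩, rfl, by rw [cut_inv_of_ne h₁ h₂]⟩

theorem cut_involutive (hG : Involutive G.inv) (f : G.F) : Involutive (G.cut f).inv := by
  intro (h : G.F)
  by_cases hh : h = f ∨ h = G.inv f
  · have e : (G.cut f).inv h = h := if_pos hh
    rw [e, e]
  · push Not at hh
    rw [cut_inv_of_ne hh.1 hh.2, cut_inv_of_ne (fun e => hh.2 (by rw [← e, hG]))
      (fun e => hh.1 (hG.injective e)), hG]

theorem cut_inv_adj (hG : Involutive G.inv) (f : G.F) : (G.cut (G.inv f)).Adj = (G.cut f).Adj := by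
  ext u v
  rw [cut_adj_iff (G := G), cut_adj_iff (G := G), hG f]
  tauto

theorem joinExt_cut (hG : Involutive G.inv) (f : G.F) : joinExt (G.cut f) f (G.inv f) = G := by
  suffices (fun h => if h = f then G.inv f else if h = G.inv f then f else (G.cut f).inv h) =
      G.inv from congrArg (fun i => ({ G with inv := i } : ColouredGraph)) this
  funext h
  by_cases h₁ : h = f
  · rw [if_pos h₁, h₁]
  by_cases h₂ : h = G.inv f
  · rw [if_neg h₁, if_pos h₂, h₂, hG]
  rw [if_neg h₁, if_neg h₂, cut_inv_of_ne h₁ h₂]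

theorem numInternalStraight_cut_lt {f : G.F} (hfc : G.colour f = false) (hfi : G.inv f ≠ f) :
    (G.cut f).numInternalStraight < G.numInternalStraight :=
  numInternalStraight_lt id injective_id (fun _ => rfl)
    (fun _ hx => (cut_inv_ne_iff.mp hx).2.2) hfc hfi (fun _ hx => (cut_inv_ne_iff.mp hx).1)

/-- When `{f, G.inv f}` is a bridge, this is the part of `G` hanging off `f`. -/
def side (G : ColouredGraph) (f : G.F) : Set G.V :=
  {v | ReflTransGen (G.cut f).Adj (G.att (G.inv f)) v}

theorem att_inv_mem_side (f : G.F) : G.att (G.inv f) ∈ G.side f := .refl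

theorem side_inv (hG : Involutive G.inv) (f : G.F) :
    G.side (G.inv f) = {v | ReflTransGen (G.cut f).Adj (G.att f) v} := by
  rw [side, cut_inv_adj hG, hG f]

theorem mem_side_or_mem_side_inv (hG : Involutive G.inv) (hconn : G.Connected) (f : G.F)
    (v : G.V) : v ∈ G.side f ∨ v ∈ G.side (G.inv f) := by
  rw [side_inv hG]
  induction hconn.2 (G.att f) v with
  | refl => exact .inr .refl
  | tail _ hadj ih =>
    obtain ⟨k, hk, rfl, rfl⟩ := hadj
    by_cases hkf : k = f
    · exact .inl (by rw [hkf]; exact .refl)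
    by_cases hkf' : k = G.inv f
    · exact .inr (by rw [hkf', hG]; exact .refl)
    have hstep := cut_adj_iff.mpr ⟨k, hkf, hkf', hk, rfl, rfl⟩
    exact ih.imp (·.tail hstep) (·.tail hstep)

theorem connected_cut_of_mem_side (hG : Involutive G.inv) (hconn : G.Connected) {f : G.F}
    (hf : G.att f ∈ G.side f) : (G.cut f).Connected := by
  refine connected_of_reach (cut_involutive hG f) (G.att (G.inv f)) fun v => ?_
  rcases mem_side_or_mem_side_inv hG hconn f v with h | h
  · exact h
  · rw [side_inv hG] at h
    exact ReflTransGen.trans hf h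

theorem side_inv_eq_compl (hG : Involutive G.inv) (hconn : G.Connected) {f : G.F}
    (hf : G.att f ∉ G.side f) : G.side (G.inv f) = (G.side f)ᶜ := by
  ext v
  refine ⟨fun hv hv' => hf ?_, (mem_side_or_mem_side_inv hG hconn f v).resolve_left⟩
  rw [side_inv hG] at hv
  exact ReflTransGen.trans hv' (reach_symm (cut_involutive hG f) hv)

theorem eq_of_notMem_side_of_mem_side (hG : Involutive G.inv) {f h : G.F}
    (hh : G.att h ∉ G.side f) (hh' : G.att (G.inv h) ∈ G.side f) : h = f := by
  by_contra hhf
  refine hh ?_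
  by_cases hhf' : h = G.inv f
  · rw [hhf']; exact .refl
  by_cases hi : G.inv h = h
  · rwa [hi] at hh'
  refine ReflTransGen.tail hh' (cut_adj_iff.mpr ⟨G.inv h, ?_, ?_, ?_, rfl, by rw [hG]⟩)
  · rintro e; exact hhf' (by rw [← e, hG])
  · exact fun e => hhf (hG.injective e)
  · rwa [hG, ne_comm]

theorem side_subset_side (hG : Involutive G.inv) {f k : G.F} (hk : G.att (G.inv k) ∈ G.side f)
    (hf : G.att f ∉ G.side k) : G.side k ⊆ G.side f := by
  intro v hv
  induction hv with
  | refl => exact hk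
  | tail hr hadj ih =>
    obtain ⟨j, -, -, hj, rfl, rfl⟩ := cut_adj_iff.mp hadj
    by_cases hjf : j = f
    · exact absurd (hjf ▸ hr) hf
    by_cases hjf' : j = G.inv f
    · subst hjf'
      rw [hG] at hadj
      exact absurd (hr.tail hadj) hf
    exact ReflTransGen.tail ih (cut_adj_iff.mpr ⟨j, hjf, hjf', hj, rfl, rfl⟩)

/-! ### Induced subgraphs -/

abbrev induce (G : ColouredGraph) (S : Set G.V) : ColouredGraph where
  V := S
  F := G.att ⁻¹' S
  att f := ⟨G.att f, f.2⟩
  inv f := if h : G.att (G.inv f) ∈ S then ⟨G.inv f, h⟩ else f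
  colour f := G.colour f

section Induce

variable {S : Set G.V}

theorem induce_inv_of_mem {x : G.att ⁻¹' S} (h : G.att (G.inv x) ∈ S) :
    (G.induce S).inv x = ⟨G.inv x, h⟩ :=
  dif_pos h

theorem induce_inv_of_notMem {x : G.att ⁻¹' S} (h : G.att (G.inv x) ∉ S) :
    (G.induce S).inv x = x :=
  dif_neg h

theorem induce_involutive (hG : Involutive G.inv) (S : Set G.V) :
    Involutive (G.induce S).inv := by
  intro x
  by_cases h : G.att (G.inv x) ∈ S
  · rw [induce_inv_of_mem h, induce_inv_of_mem (by rw [hG]; exact x.2)]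
    exact Subtype.ext (hG x)
  · rw [induce_inv_of_notMem h, induce_inv_of_notMem h]

theorem numInternalStraight_induce_lt {f : G.F} (hf : G.att f ∈ S) (hf' : G.att (G.inv f) ∉ S)
    (hfc : G.colour f = false) (hfi : G.inv f ≠ f) :
    (G.induce S).numInternalStraight < G.numInternalStraight := by
  refine numInternalStraight_lt Subtype.val Subtype.val_injective (fun _ => rfl)
    (fun x hx => ?_) hfc hfi (fun x hx => ?_)
  · by_cases h : G.att (G.inv x) ∈ S
    · rw [induce_inv_of_mem h] at hx
      exact fun e => hx (Subtype.ext e)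
    · exact absurd (induce_inv_of_notMem h) hx
  · rintro rfl
    exact hx (induce_inv_of_notMem hf')

end Induce

theorem reach_induce_side (f : G.F) {v : G.V} (hv : v ∈ G.side f) :
    ReflTransGen (G.induce (G.side f)).Adj ⟨G.att (G.inv f), .refl⟩ ⟨v, hv⟩ := by
  induction hv with
  | refl => exact .refl
  | tail hr hadj ih =>
    obtain ⟨k, -, -, hk, rfl, rfl⟩ := cut_adj_iff.mp hadj
    refine ih.tail ⟨⟨k, hr⟩, ?_, rfl, ?_⟩ <;> rw [induce_inv_of_mem (S := G.side f) (hr.tail hadj)]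
    exact fun e => hk (congrArg Subtype.val e)

theorem induce_side_inv_eq_of_straight (hG : Involutive G.inv) {f : G.F}
    (hf : G.att f ∉ G.side f)
    (hleaf : ∀ h, G.colour h = false → G.inv h ≠ h → G.att h ∈ G.side f → h = G.inv f)
    (x : (G.induce (G.side f)).F) (hx : (G.induce (G.side f)).colour x = false) :
    (G.induce (G.side f)).inv x = x := by
  by_contra hne
  by_cases h : G.att (G.inv x) ∈ G.side f
  · rw [induce_inv_of_mem h] at hne
    rw [hleaf x hx (fun e => hne (Subtype.ext e)) x.2, hG] at h
    exact hf h
  · exact hne (induce_inv_of_notMem h)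

/-! ### Gluing two graphs along external half-edges -/

abbrev glue (G : ColouredGraph) (f : G.F) (H : ColouredGraph) (g : H.F) : ColouredGraph where
  V := G.V ⊕ H.V
  F := G.F ⊕ H.F
  att := Sum.map G.att H.att
  inv := Sum.elim (fun a => if a = f then .inr g else .inl (G.inv a))
    (fun b => if b = g then .inl f else .inr (H.inv b))
  colour := Sum.elim G.colour H.colour

theorem attachGS_eq_glue (G : ColouredGraph) (f : G.F) (g : Bool × Fin 3) :
    attachGS G f g = G.glue f GS g := by
  simp only [attachGS, glue]
  congr 1
  funext x
  rcases x with a | b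
  · rfl
  · simp only [Sum.elim_inr, GS]
    split_ifs <;> simp_all

theorem glue_involutive (hG : Involutive G.inv) (hH : Involutive H.inv) {f : G.F} {g : H.F}
    (hf : G.inv f = f) (hg : H.inv g = g) : Involutive (G.glue f H g).inv := by
  rintro (a | b)
  · by_cases ha : a = f
    · simp [ha]
    · have : G.inv a ≠ f := fun e => ha (by rw [← hG a, e, hf])
      simp [ha, this, hG a]
  · by_cases hb : b = g
    · simp [hb]
    · have : H.inv b ≠ g := fun e => hb (by rw [← hH b, e, hg])
      simp [hb, this, hH b]

theorem glue_connected (hGi : Involutive G.inv) (hHi : Involutive H.inv) (hG : G.Connected)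
    (hH : H.Connected) {f : G.F} {g : H.F} (hf : G.inv f = f) (hg : H.inv g = g) :
    (G.glue f H g).Connected := by
  have hadjG : ∀ u v, G.Adj u v → (G.glue f H g).Adj (.inl u) (.inl v) := by
    rintro _ _ ⟨k, hk, rfl, rfl⟩
    have hkf : k ≠ f := by rintro rfl; exact hk hf
    exact ⟨.inl k, by simp [hkf, hk], rfl, by simp [hkf]⟩
  have hadjH : ∀ u v, H.Adj u v → (G.glue f H g).Adj (.inr u) (.inr v) := by
    rintro _ _ ⟨k, hk, rfl, rfl⟩
    have hkg : k ≠ g := by rintro rfl; exact hk hg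
    exact ⟨.inr k, by simp [hkg, hk], rfl, by simp [hkg]⟩
  have hbridge : (G.glue f H g).Adj (.inl (G.att f)) (.inr (H.att g)) :=
    ⟨.inl f, by simp, rfl, by simp⟩
  refine connected_of_reach (glue_involutive hGi hHi hf hg) (.inl (G.att f)) ?_
  rintro (v | w)
  · exact (hG.2 _ v).lift _ hadjG
  · exact ReflTransGen.head hbridge ((hH.2 _ w).lift _ hadjH)

theorem glue_iso_right (f : G.F) {H' : ColouredGraph} (h : H.Iso H') (g' : H'.F) :
    ∃ g, H.colour g = H'.colour g' ∧ (G.glue f H g).Iso (G.glue f H' g') := by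
  obtain ⟨eV, eF, hatt, hinv, hcol⟩ := h
  refine ⟨eF.symm g', by rw [← hcol, Equiv.apply_symm_apply], Equiv.sumCongr (.refl _) eV,
    Equiv.sumCongr (.refl _) eF, ?_, ?_, ?_⟩
  · rintro (a | b) <;> simp [hatt]
  · rintro (a | b)
    · by_cases ha : a = f <;> simp [ha]
    · by_cases hb : b = eF.symm g'
      · simp [hb]
      · have : eF b ≠ g' := fun e => hb (by rw [← e, Equiv.symm_apply_apply])
        simp [hb, this, hinv]
  · rintro (a | b) <;> simp [hcol]

theorem glue_induce_iso (hG : Involutive G.inv) {S : Set G.V} {f : G.F} (hf : G.att f ∈ Sᶜ)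
    (hfS : G.att (G.inv f) ∈ S) (hcross : ∀ h, G.att h ∉ S → G.att (G.inv h) ∈ S → h = f) :
    ((G.induce Sᶜ).glue ⟨f, hf⟩ (G.induce S) ⟨G.inv f, hfS⟩).Iso G := by
  refine ⟨(Equiv.sumComm _ _).trans (Equiv.Set.sumCompl S),
    (Equiv.sumComm _ _).trans (Equiv.Set.sumCompl (G.att ⁻¹' S)), ?_, ?_, ?_⟩
  · rintro (a | b) <;> simp
  · rintro (a | b)
    · by_cases ha : a.1 = f
      · obtain rfl : a = ⟨f, hf⟩ := Subtype.ext ha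
        simp
      · have ha' : a ≠ ⟨f, hf⟩ := fun e => ha (congrArg Subtype.val e)
        have hS : G.att (G.inv a) ∉ S := fun h => ha (hcross a a.2 h)
        simp [ha', hS]
    · by_cases hb : b.1 = G.inv f
      · obtain rfl : b = ⟨G.inv f, hfS⟩ := Subtype.ext hb
        simp [hG f]
      · have hS : G.att (G.inv b) ∈ S := by
          by_contra h
          exact hb (by rw [← hcross _ h (by rw [hG]; exact b.2), hG])
        have hb' : b ≠ ⟨G.inv f, hfS⟩ := fun e => hb (congrArg Subtype.val e)
        simp [hb', hS]
  · rintro (a | b) <;> rfl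

end ColouredGraph

/-! ### `φ²A`-graphs -/

theorem isPhi2AGraph_GS : IsPhi2AGraph GS := by
  have hinv : Involutive GS.inv := by rintro ⟨b, i⟩; fin_cases i <;> cases b <;> rfl
  refine ⟨hinv, ?_, ColouredGraph.connected_of_reach hinv false fun v => ?_, fun v => ?_,
    fun v => ?_, ?_⟩
  · rintro ⟨b, i⟩; fin_cases i <;> cases b <;> rfl
  · cases v
    · exact .refl
    · exact .single ⟨(false, 2), by simp [GS], rfl, rfl⟩
  · rw [Fintype.card_subtype]; cases v <;> simp [GS] <;> decide
  · rw [Fintype.card_subtype]; cases v <;> simp [GS] <;> decide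
  · rintro ⟨b, i⟩; fin_cases i <;> cases b <;> simp [GS]

namespace IsPhi2AGraph

open ColouredGraph

variable {G H : ColouredGraph}

theorem involutive (hG : IsPhi2AGraph G) : Involutive G.inv := hG.1

theorem colour_inv (hG : IsPhi2AGraph G) (f : G.F) : G.colour (G.inv f) = G.colour f := hG.2.1 f

theorem connected (hG : IsPhi2AGraph G) : G.Connected := hG.2.2.1

theorem card_straight (hG : IsPhi2AGraph G) (v : G.V) :
    Fintype.card {f : G.F // G.att f = v ∧ G.colour f = false} = 2 := hG.2.2.2.1 v

theorem card_wavy (hG : IsPhi2AGraph G) (v : G.V) :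
    Fintype.card {f : G.F // G.att f = v ∧ G.colour f = true} = 1 := hG.2.2.2.2.1 v

theorem inv_ne_of_wavy (hG : IsPhi2AGraph G) {w : G.F} (hw : G.colour w = true) :
    G.inv w ≠ w := hG.2.2.2.2.2 w hw

theorem att_inv_ne_of_wavy (hG : IsPhi2AGraph G) {w : G.F} (hw : G.colour w = true) :
    G.att (G.inv w) ≠ G.att w := fun h =>
  hG.inv_ne_of_wavy hw (eq_of_wavy_of_att_eq hG.card_wavy (by rw [hG.colour_inv, hw]) hw h)

theorem of_iso (hG : IsPhi2AGraph G) (h : G.Iso H) : IsPhi2AGraph H := by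
  obtain ⟨hinv, hcol, ⟨⟨v₀⟩, hconn⟩, hs, hw, hint⟩ := hG
  obtain ⟨eV, eF, hatt, hinvF, hcolF⟩ := h
  have hinvH : Involutive H.inv := fun x => by
    obtain ⟨y, rfl⟩ := eF.surjective x
    rw [← hinvF, ← hinvF, hinv]
  have hadj : ∀ u v, G.Adj u v → H.Adj (eV u) (eV v) := by
    rintro _ _ ⟨k, hk, rfl, rfl⟩
    exact ⟨eF k, by rw [← hinvF]; exact eF.injective.ne hk, (hatt k).symm, by rw [← hinvF, hatt]⟩
  have hcard := card_fibre_eq eV eF eV.injective eF.injective (fun x => (hatt x).symm) hcolF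
    (fun f _ _ => eF.surjective f)
  refine ⟨hinvH, fun x => ?_, connected_of_reach hinvH (eV v₀) fun v => ?_,
    fun v => ?_, fun v => ?_, fun x hx => ?_⟩
  · obtain ⟨y, rfl⟩ := eF.surjective x
    rw [← hinvF, hcolF, hcolF, hcol]
  · obtain ⟨u, rfl⟩ := eV.surjective v
    exact (hconn v₀ u).lift eV hadj
  · obtain ⟨u, rfl⟩ := eV.surjective v
    exact (hcard u false).symm.trans (hs u)
  · obtain ⟨u, rfl⟩ := eV.surjective v
    exact (hcard u true).symm.trans (hw u)
  · obtain ⟨y, rfl⟩ := eF.surjective x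
    rw [← hinvF]
    exact eF.injective.ne (hint y (by rwa [← hcolF]))

/-- With every straight half-edge external, the wavy edges are the only edges, so connectedness
leaves room for just one of them. -/
theorem iso_GS (hG : IsPhi2AGraph G) (hext : ∀ f, G.colour f = false → G.inv f = f) :
    G.Iso GS := by
  obtain ⟨hinv, hcol, ⟨⟨v₀⟩, hconn⟩, hs, hw, -⟩ := id hG
  obtain ⟨e, he⟩ := exists_halfEdgeEquiv hs hw
  set w₀ := e.symm (v₀, 2)
  have hw₀ : G.att w₀ = v₀ ∧ G.colour w₀ = true := by
    rw [← (he w₀).1, (he w₀).2, Equiv.apply_symm_apply]; exact ⟨rfl, rfl⟩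
  have hwavy : ∀ {k}, G.inv k ≠ k → G.colour k = true := fun hk =>
    (Bool.not_eq_false _).mp fun hc => hk (hext _ hc)
  have htwo : ∀ v, v = v₀ ∨ v = G.att (G.inv w₀) := by
    intro v
    induction hconn v₀ v with
    | refl => exact .inl rfl
    | tail _ hadj ih =>
      obtain ⟨k, hk, rfl, rfl⟩ := hadj
      rcases ih with h | h
      · rw [eq_of_wavy_of_att_eq hw (hwavy hk) hw₀.2 (h.trans hw₀.1.symm)]; exact .inr rfl
      · rw [eq_of_wavy_of_att_eq hw (hwavy hk) (by rw [hcol, hw₀.2]) h, hinv]; exact .inl hw₀.1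
  have hne : v₀ ≠ G.att (G.inv w₀) := hw₀.1 ▸ (hG.att_inv_ne_of_wavy hw₀.2).symm
  let eV : G.V ≃ Bool := Fintype.equivOfCardEq <| by
    rw [Fintype.card_bool, ← Finset.card_univ, ← Finset.card_pair hne]
    exact congrArg _ (Finset.eq_univ_of_forall fun v => by simpa using htwo v).symm
  refine ⟨eV, e.trans (Equiv.prodCongr eV (Equiv.refl _)), fun f => ?_, fun f => ?_, fun f => ?_⟩
  · show eV (G.att f) = eV (e f).1
    rw [(he f).1]
  · show (eV (e (G.inv f)).1, (e (G.inv f)).2) = GS.inv (eV (e f).1, (e f).2)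
    cases hc : G.colour f
    · have h2 : (e f).2 ≠ 2 := fun h => by simp [(he f).2.mpr h] at hc
      simp only [GS, hext f hc, h2, if_false]
    · have h2 : (e f).2 = 2 := (he f).2.mp hc
      have h2' : (e (G.inv f)).2 = 2 := (he _).2.mp (by rw [hcol, hc])
      have hflip : eV (G.att (G.inv f)) = !eV (G.att f) :=
        Bool.eq_not.mpr (eV.injective.ne (hG.att_inv_ne_of_wavy hc))
      simp only [GS, h2, h2', (he f).1, (he (G.inv f)).1, hflip, if_true]
  · show decide ((e f).2 = 2) = G.colour f
    simp only [← (he f).2, Bool.decide_eq_true]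

theorem update_inv (hG : IsPhi2AGraph G) {i : G.F → G.F}
    (hi : Involutive i) (hcol : ∀ f, G.colour (i f) = G.colour f)
    (hwavy : ∀ f, G.colour f = true → i f = G.inv f)
    (hconn : ({ G with inv := i } : ColouredGraph).Connected) :
    IsPhi2AGraph { G with inv := i } :=
  ⟨hi, hcol, hconn, hG.card_straight, hG.card_wavy, fun f hf =>
    show i f ≠ f by rw [hwavy f hf]; exact hG.inv_ne_of_wavy hf⟩

theorem join (hG : IsPhi2AGraph G) {f f' : G.F}
    (hf : G.inv f = f) (hf' : G.inv f' = f') (hne : f ≠ f')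
    (hcf : G.colour f = false) (hcf' : G.colour f' = false) :
    IsPhi2AGraph (joinExt G f f') := by
  set i : G.F → G.F := fun g => if g = f then f' else if g = f' then f else G.inv g
  have hint : ∀ g, G.inv g ≠ g → i g = G.inv g := fun g hg => by
    simp only [i, if_neg (show g ≠ f by rintro rfl; exact hg hf),
      if_neg (show g ≠ f' by rintro rfl; exact hg hf')]
  have hi : Involutive i := fun g => by
    by_cases hg : G.inv g = g
    · by_cases hgf : g = f
      · simp [i, hgf, hne.symm]
      by_cases hgf' : g = f'
      · simp [i, hgf']
      simp [i, hgf, hgf', hg]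
    · rw [hint g hg, hint _ (by rwa [hG.involutive, ne_comm]), hG.involutive]
  refine hG.update_inv hi (fun g => ?_) (fun g hg => hint g (hG.inv_ne_of_wavy hg))
    (connected_update_inv hG.connected hint)
  split_ifs with h₁ h₂
  · rw [h₁, hcf, hcf']
  · rw [h₂, hcf, hcf']
  · exact hG.colour_inv g

theorem cut (hG : IsPhi2AGraph G) {f : G.F} (hfc : G.colour f = false)
    (hconn : (G.cut f).Connected) : IsPhi2AGraph (G.cut f) := by
  refine hG.update_inv (cut_involutive hG.involutive f) (fun h => ?_) (fun h hh => ?_) hconn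
  · by_cases hh : h = f ∨ h = G.inv f
    · rw [if_pos hh]
    · rw [if_neg hh, hG.colour_inv]
  · refine cut_inv_of_ne ?_ ?_ <;> rintro rfl
    · simp [hfc] at hh
    · simp [hG.colour_inv, hfc] at hh

theorem glue (hG : IsPhi2AGraph G) (hH : IsPhi2AGraph H) {f : G.F} {g : H.F}
    (hf : G.inv f = f) (hg : H.inv g = g) (hcf : G.colour f = false)
    (hcg : H.colour g = false) : IsPhi2AGraph (G.glue f H g) := by
  have hcardG := card_fibre_eq (G := G) (H := G.glue f H g) Sum.inl Sum.inl Sum.inl_injective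
    Sum.inl_injective (fun _ => rfl) (fun _ => rfl) fun x v hx => by
      rcases x with a | b
      · exact ⟨a, rfl⟩
      · simp at hx
  have hcardH := card_fibre_eq (G := H) (H := G.glue f H g) Sum.inr Sum.inr Sum.inr_injective
    Sum.inr_injective (fun _ => rfl) (fun _ => rfl) fun x v hx => by
      rcases x with a | b
      · simp at hx
      · exact ⟨b, rfl⟩
  refine ⟨glue_involutive hG.involutive hH.involutive hf hg, ?_,
    glue_connected hG.involutive hH.involutive hG.connected hH.connected hf hg, ?_, ?_, ?_⟩
  · rintro (a | b)
    · by_cases ha : a = f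
      · simp [ha, hcf, hcg]
      · simp [ha, hG.colour_inv]
    · by_cases hb : b = g
      · simp [hb, hcf, hcg]
      · simp [hb, hH.colour_inv]
  · rintro (v | w)
    · exact (hcardG v false).symm.trans (hG.card_straight v)
    · exact (hcardH w false).symm.trans (hH.card_straight w)
  · rintro (v | w)
    · exact (hcardG v true).symm.trans (hG.card_wavy v)
    · exact (hcardH w true).symm.trans (hH.card_wavy w)
  · rintro (a | b) hx
    · have ha : a ≠ f := by rintro rfl; simp [hcf] at hx
      simpa [ha] using hG.inv_ne_of_wavy hx
    · have hb : b ≠ g := by rintro rfl; simp [hcg] at hx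
      simpa [hb] using hH.inv_ne_of_wavy hx

theorem induce (hG : IsPhi2AGraph G)
    (hwavy : ∀ w, G.colour w = true → G.att w ∈ S → G.att (G.inv w) ∈ S)
    (hconn : (G.induce S).Connected) : IsPhi2AGraph (G.induce S) := by
  obtain ⟨hinv, hcol, -, hs, hw, hint⟩ := hG
  have hcard := card_fibre_eq (G := G.induce S) (H := G) Subtype.val Subtype.val
    Subtype.val_injective Subtype.val_injective (fun _ => rfl) (fun _ => rfl)
    (fun f v hf => ⟨⟨f, by rw [Set.mem_preimage, hf]; exact v.2⟩, rfl⟩)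
  refine ⟨induce_involutive hinv S, fun x => ?_, hconn, fun v => (hcard v false).trans (hs v),
    fun v => (hcard v true).trans (hw v), fun x hx => ?_⟩
  · by_cases h : G.att (G.inv x) ∈ S
    · rw [induce_inv_of_mem h]; exact hcol x
    · rw [induce_inv_of_notMem h]
  · rw [induce_inv_of_mem (hwavy x hx x.2)]
    exact fun e => hint x hx (congrArg Subtype.val e)

theorem induce_side (hG : IsPhi2AGraph G) {f : G.F}
    (hfc : G.colour f = false) : IsPhi2AGraph (G.induce (G.side f)) := by
  refine hG.induce (fun w hw hwS => ?_) (connected_of_reach (induce_involutive hG.involutive _)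
    ⟨G.att (G.inv f), .refl⟩ fun v => reach_induce_side f v.2)
  refine ReflTransGen.tail hwS (cut_adj_iff.mpr ⟨w, ?_, ?_, hG.inv_ne_of_wavy hw, rfl, rfl⟩) <;>
    rintro rfl
  · simp [hfc] at hw
  · simp [hG.colour_inv, hfc] at hw

theorem induce_compl_side (hG : IsPhi2AGraph G) {f : G.F} (hfc : G.colour f = false)
    (hf : G.att f ∉ G.side f) : IsPhi2AGraph (G.induce (G.side f)ᶜ) :=
  side_inv_eq_compl hG.involutive hG.connected hf ▸ hG.induce_side (by rw [hG.colour_inv, hfc])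

/-- Take a bridge whose far side is smallest: another internal straight edge on that side would
be a bridge cutting off a strictly smaller side. -/
theorem exists_leaf_bridge (hG : IsPhi2AGraph G)
    (hbridge : ∀ f, G.colour f = false → G.inv f ≠ f → G.att f ∉ G.side f)
    (hex : ∃ f, G.colour f = false ∧ G.inv f ≠ f) :
    ∃ f, G.colour f = false ∧ G.inv f ≠ f ∧
      ∀ h, G.colour h = false → G.inv h ≠ h → G.att h ∈ G.side f → h = G.inv f := by
  obtain ⟨f, ⟨hfc, hfi⟩, hmin⟩ := Set.exists_min_image {f | G.colour f = false ∧ G.inv f ≠ f}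
    (fun f => (G.side f).ncard) (Set.toFinite _) hex
  refine ⟨f, hfc, hfi, fun h hhc hhi hh => by_contra fun hne => ?_⟩
  have hhf : h ≠ f := by rintro rfl; exact hbridge h hhc hhi hh
  have hh' : G.att (G.inv h) ∈ G.side f := hh.tail (cut_adj_iff.mpr ⟨h, hhf, hne, hhi, rfl, rfl⟩)
  obtain ⟨k, hkc, hki, hk, hk', hkf⟩ : ∃ k, G.colour k = false ∧ G.inv k ≠ k ∧
      G.att k ∈ G.side f ∧ G.att (G.inv k) ∈ G.side f ∧ G.att f ∉ G.side k := by
    by_cases hfh : G.att f ∈ G.side h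
    · refine ⟨G.inv h, by rwa [hG.colour_inv], by rwa [hG.involutive, ne_comm], hh',
        by rwa [hG.involutive], ?_⟩
      rw [side_inv_eq_compl hG.involutive hG.connected (hbridge h hhc hhi)]
      exact not_not.mpr hfh
    · exact ⟨h, hhc, hhi, hh, hh', hfh⟩
  have hlt : (G.side k).ncard < (G.side f).ncard :=
    Set.ncard_lt_ncard ((Set.ssubset_iff_of_subset (side_subset_side hG.involutive hk' hkf)).mpr
      ⟨_, hk, hbridge k hkc hki⟩)
  exact (hmin k ⟨hkc, hki⟩).not_gt hlt

end IsPhi2AGraph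

open ColouredGraph

theorem InLangA.isPhi2AGraph {G : ColouredGraph} (h : InLangA G) : IsPhi2AGraph G := by
  induction h with
  | start => exact isPhi2AGraph_GS
  | join _ f f' hf hf' hne hcf hcf' ih => exact ih.join hf hf' hne hcf hcf'
  | attach _ f hf hcf g hg ih =>
    rw [attachGS_eq_glue]
    exact ih.glue isPhi2AGraph_GS hf (if_neg hg) hcf (decide_eq_false hg)
  | iso _ h ih => exact ih.of_iso h

theorem InLangA.of_leaf_bridge {G : ColouredGraph} (hG : IsPhi2AGraph G) {f : G.F}
    (hfc : G.colour f = false) (hf : G.att f ∉ G.side f)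
    (hleaf : ∀ h, G.colour h = false → G.inv h ≠ h → G.att h ∈ G.side f → h = G.inv f)
    (hrest : InLangA (G.induce (G.side f)ᶜ)) : InLangA G := by
  have hGS := (hG.induce_side hfc).iso_GS (induce_side_inv_eq_of_straight hG.involutive hf hleaf)
  obtain ⟨g, hg, hiso⟩ := glue_iso_right (G := G.induce (G.side f)ᶜ) ⟨f, hf⟩ hGS.symm
    ⟨G.inv f, att_inv_mem_side f⟩
  have hg2 : ¬ g.2 = 2 := fun h2 => by simp [GS, h2, hG.colour_inv, hfc] at hg
  have hattach := hrest.attach ⟨f, hf⟩ (induce_inv_of_notMem (not_not.mpr (att_inv_mem_side f)))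
    hfc g hg2
  rw [attachGS_eq_glue (G.induce (G.side f)ᶜ) ⟨f, hf⟩ g] at hattach
  exact .iso (.iso hattach hiso) (glue_induce_iso hG.involutive hf (att_inv_mem_side f)
    fun _ => eq_of_notMem_side_of_mem_side hG.involutive)

theorem InLangA.of_isPhi2AGraph {G : ColouredGraph} (hG : IsPhi2AGraph G) : InLangA G := by
  induction hn : G.numInternalStraight using Nat.strong_induction_on generalizing G with
  | _ n ih =>
  subst hn
  by_cases hext : ∀ f, G.colour f = false → G.inv f = f
  · exact .iso .start (hG.iso_GS hext).symm
  push Not at hext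
  by_cases hcyc : ∃ f, G.colour f = false ∧ G.inv f ≠ f ∧ G.att f ∈ G.side f
  · obtain ⟨f, hfc, hfi, hf⟩ := hcyc
    have hcut := hG.cut hfc (connected_cut_of_mem_side hG.involutive hG.connected hf)
    rw [← joinExt_cut hG.involutive f]
    exact .join (ih _ (numInternalStraight_cut_lt hfc hfi) hcut rfl) f (G.inv f)
      (if_pos (.inl rfl)) (if_pos (.inr rfl)) hfi.symm hfc (by rw [hG.colour_inv, hfc])
  push Not at hcyc
  obtain ⟨f, hfc, hfi, hleaf⟩ := hG.exists_leaf_bridge hcyc hext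
  have hf := hcyc f hfc hfi
  refine .of_leaf_bridge hG hfc hf hleaf (ih _ ?_ (hG.induce_compl_side hfc hf) rfl)
  exact numInternalStraight_induce_lt hf (not_not.mpr (att_inv_mem_side f)) hfc hfi

/-- the graph language generated by `G_S` under the two production rules
is exactly the set of Feynman graphs of the `φ²A`-theory. -/
theorem phi2A_graph_language :
    ∀ G : ColouredGraph, InLangA G ↔ IsPhi2AGraph G :=
  fun _ => ⟨InLangA.isPhi2AGraph, InLangA.of_isPhi2AGraph⟩
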